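/- Suppose that for every u ∈ U and every v ∈ V there exists a coordinate c with u[c] = v[c] = w[c] = 1. Then in the eccentricity-construction graph G_ecc, for every u ∈ U the vertex u^a has eccentricity at most 3a+2; that is, for every vertex z of G_ecc there is a walk between u^a and z of length at most 3a+2. -/

import Mathlib

/-!
Everything is reached from `u^a` through `x`: `u^a` is within `a + 1` of `x`, hence within
`a + 2` of every `u'^0` and within `2a + 2` of every `u'^a`. For `v ∈ V` the hypothesis gives a
coordinate `c` with `u[c] = v[c] = w[c] = 1`, so `u^a → c_U → c_V → v^0` has length `2a + 1`,
and `v^a` follows within `3a + 1`. Each `c_U` (resp. `c_V`) is reached along the path from some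
`u'^a` (resp. `v'^0`) with a `1` at `c`, and an internal vertex of an added path lies at most
`a - 1` beyond an endpoint already reached. The worst case is `c_U`, at `3a + 2`.
-/

namespace EccConstr

variable {B P : Type*}

/-- Vertices of a graph assembled from base vertices `B` and, for each path request
`p : P` of length `L p`, the `L p - 1` internal vertices of the path. -/
abbrev Vert (B P : Type*) (L : P → ℕ) : Type _ := B ⊕ (Σ p : P, Fin (L p - 1))

/-- `pos e0 e1 L p i z` : `z` is the `i`-th vertex along the path `p`
(whose endpoints are `e0 p` and `e1 p` and whose length is `L p`). -/
def pos (e0 e1 : P → B) (L : P → ℕ) (p : P) (i : ℕ) (z : Vert B P L) : Prop :=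
  (i = 0 ∧ z = Sum.inl (e0 p)) ∨ (i = L p ∧ z = Sum.inl (e1 p)) ∨
    (∃ h : i - 1 < L p - 1, 0 < i ∧ i < L p ∧ z = Sum.inr ⟨p, ⟨i - 1, h⟩⟩)

/-- The graph obtained from the base vertex set `B` by adding, for each `p : P`, an
internally vertex-disjoint path of length `L p` between the vertices `e0 p` and
`e1 p` (for `L p = 1` this is just an edge). -/
def pathGraph (e0 e1 : P → B) (L : P → ℕ) : SimpleGraph (Vert B P L) where
  Adj x y := x ≠ y ∧ ∃ p i, i < L p ∧
    ((pos e0 e1 L p i x ∧ pos e0 e1 L p (i + 1) y) ∨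
     (pos e0 e1 L p i y ∧ pos e0 e1 L p (i + 1) x))
  symm := by
    constructor
    rintro x y ⟨hne, p, i, hi, h⟩
    exact ⟨hne.symm, p, i, hi, h.symm⟩
  loopless := ⟨fun x h => h.1 rfl⟩

/-- Base (named) vertices of the eccentricity-construction graph `G_ecc`. -/
inductive Base (ℓ : ℕ) (U V : Set (Fin ℓ → Bool)) : Type
  | cU (c : Fin ℓ)
  | cV (c : Fin ℓ)
  | u0 (u : U)
  | ua (u : U)
  | v0 (v : V)
  | va (v : V)
  | x

/-- Path requests of the eccentricity-construction graph `G_ecc`. -/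
inductive Pth (ℓ : ℕ) (U V : Set (Fin ℓ → Bool)) (w : Fin ℓ → Bool) : Type
  | upath (u : U)                                      -- u^0 … u^a, length a
  | vpath (v : V)                                      -- v^0 … v^a, length a
  | uc (u : U) (c : Fin ℓ) (h : u.1 c = true)          -- u^a — c_U, length a
  | vc (v : V) (c : Fin ℓ) (h : v.1 c = true)          -- c_V — v^0, length a
  | wc (c : Fin ℓ) (h : w c = true)                    -- edge c_U — c_V
  | xu (u : U)                                         -- edge x — u^0

variable {ℓ : ℕ} {U V : Set (Fin ℓ → Bool)} {w : Fin ℓ → Bool}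

/-- First endpoint of each path request. -/
def e0 : Pth ℓ U V w → Base ℓ U V
  | .upath u => .u0 u
  | .vpath v => .v0 v
  | .uc u _ _ => .ua u
  | .vc _ c _ => .cV c
  | .wc c _ => .cU c
  | .xu _ => .x

/-- Second endpoint of each path request. -/
def e1 : Pth ℓ U V w → Base ℓ U V
  | .upath u => .ua u
  | .vpath v => .va v
  | .uc _ c _ => .cU c
  | .vc v _ _ => .v0 v
  | .wc c _ => .cV c
  | .xu u => .u0 u

/-- Length of each path request: the `c_U — c_V` connections and the `x — u^0`
connections are single edges, all other paths have length `a`. -/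
def len (a : ℕ) : Pth ℓ U V w → ℕ
  | .wc _ _ => 1
  | .xu _ => 1
  | _ => a

/-- The eccentricity-construction graph `G_ecc`. -/
def Gecc (a ℓ : ℕ) (U V : Set (Fin ℓ → Bool)) (w : Fin ℓ → Bool) :
    SimpleGraph (Vert (Base ℓ U V) (Pth ℓ U V w) (len a)) :=
  pathGraph e0 e1 (len a)

end EccConstr

theorem SimpleGraph.edist_le_of_add_le {V : Type*} {G : SimpleGraph V} {u v w : V} {m n k : ℕ}
    (h₁ : G.edist u v ≤ m) (h₂ : G.edist v w ≤ n) (h : m + n ≤ k) : G.edist u w ≤ k :=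
  G.edist_triangle.trans <| (add_le_add h₁ h₂).trans <| mod_cast h

theorem SimpleGraph.exists_walk_length_le_of_edist_le {V : Type*} {G : SimpleGraph V} {u v : V}
    {n : ℕ} (h : G.edist u v ≤ n) : ∃ p : G.Walk u v, p.length ≤ n := by
  obtain ⟨p, hp⟩ := G.exists_walk_of_edist_ne_top (ne_top_of_le_ne_top (ENat.natCast_ne_top n) h)
  exact ⟨p, by exact_mod_cast hp ▸ h⟩

namespace EccConstr

open SimpleGraph

section pathGraph

variable {B P : Type*} {f₀ f₁ : P → B} {L : P → ℕ}

/-- The `i`-th vertex along the path `p`, meaningful for `i ≤ L p`. -/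
def pathVertex (f₀ f₁ : P → B) (L : P → ℕ) (p : P) (i : ℕ) : Vert B P L :=
  if h : 0 < i ∧ i < L p then Sum.inr ⟨p, ⟨i - 1, by omega⟩⟩
  else if i = 0 then Sum.inl (f₀ p) else Sum.inl (f₁ p)

theorem pathVertex_zero (p : P) : pathVertex f₀ f₁ L p 0 = Sum.inl (f₀ p) := by
  simp [pathVertex]

theorem pathVertex_length (p : P) (hL : 0 < L p) :
    pathVertex f₀ f₁ L p (L p) = Sum.inl (f₁ p) := by
  simp [pathVertex, hL.ne']

theorem pathVertex_succ (p : P) (j : Fin (L p - 1)) :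
    pathVertex f₀ f₁ L p (j + 1) = Sum.inr ⟨p, j⟩ := by
  have hj := j.2
  rw [pathVertex, dif_pos (by omega)]
  rfl

theorem pos_pathVertex (p : P) {i : ℕ} (hi : i ≤ L p) :
    pos f₀ f₁ L p i (pathVertex f₀ f₁ L p i) := by
  unfold pathVertex pos
  split_ifs with h₁ h₂
  · exact Or.inr (Or.inr ⟨by omega, h₁.1, h₁.2, rfl⟩)
  · exact Or.inl ⟨h₂, rfl⟩
  · exact Or.inr (Or.inl ⟨by omega, rfl⟩)

theorem pathVertex_ne_succ (p : P) (hne : f₀ p ≠ f₁ p) {i : ℕ} (hi : i < L p) :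
    pathVertex f₀ f₁ L p i ≠ pathVertex f₀ f₁ L p (i + 1) := by
  unfold pathVertex
  split_ifs <;> simp_all [Fin.ext_iff]; omega

theorem pathGraph_adj_pathVertex (p : P) (hne : f₀ p ≠ f₁ p) {i : ℕ} (hi : i < L p) :
    (pathGraph f₀ f₁ L).Adj (pathVertex f₀ f₁ L p i) (pathVertex f₀ f₁ L p (i + 1)) :=
  ⟨pathVertex_ne_succ p hne hi, p, i, hi, Or.inl ⟨pos_pathVertex p hi.le, pos_pathVertex p hi⟩⟩

theorem edist_pathVertex_add_le (p : P) (hne : f₀ p ≠ f₁ p) {i k : ℕ} (h : i + k ≤ L p) :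
    (pathGraph f₀ f₁ L).edist (pathVertex f₀ f₁ L p i) (pathVertex f₀ f₁ L p (i + k)) ≤ k := by
  induction k with
  | zero => simp
  | succ k ih =>
    rw [← add_assoc]
    have hadj := pathGraph_adj_pathVertex (L := L) (i := i + k) p hne (by omega)
    exact edist_le_of_add_le (n := 1) (ih (by omega)) (edist_eq_one_iff_adj.mpr hadj).le le_rfl

theorem edist_source_target_le (p : P) (hne : f₀ p ≠ f₁ p) (hL : 0 < L p) :
    (pathGraph f₀ f₁ L).edist (Sum.inl (f₀ p)) (Sum.inl (f₁ p)) ≤ L p := by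
  simpa [pathVertex_zero, pathVertex_length p hL] using
    edist_pathVertex_add_le (L := L) (i := 0) (k := L p) p hne (by omega)

theorem edist_source_inr_le (p : P) (hne : f₀ p ≠ f₁ p) (j : Fin (L p - 1)) :
    (pathGraph f₀ f₁ L).edist (Sum.inl (f₀ p)) (Sum.inr ⟨p, j⟩) ≤ (L p - 1 : ℕ) := by
  have hj := j.2
  refine (?_ : _ ≤ ((j + 1 : ℕ) : ℕ∞)).trans (mod_cast hj)
  simpa [pathVertex_zero, pathVertex_succ] using
    edist_pathVertex_add_le (L := L) (i := 0) (k := j + 1) p hne (by omega)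

theorem edist_inr_target_le (p : P) (hne : f₀ p ≠ f₁ p) (j : Fin (L p - 1)) :
    (pathGraph f₀ f₁ L).edist (Sum.inr ⟨p, j⟩) (Sum.inl (f₁ p)) ≤ (L p - 1 : ℕ) := by
  have hj := j.2
  have h := edist_pathVertex_add_le (L := L) (i := j + 1) (k := L p - 1 - j) p hne (by omega)
  rw [pathVertex_succ, show (j : ℕ) + 1 + (L p - 1 - j) = L p by omega,
    pathVertex_length p (by omega)] at h
  exact h.trans (mod_cast (by omega : L p - 1 - j ≤ L p - 1))

end pathGraph

section Gecc

variable {a ℓ : ℕ} {U V : Set (Fin ℓ → Bool)} {w : Fin ℓ → Bool}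

theorem e0_ne_e1 (p : Pth ℓ U V w) : e0 p ≠ e1 p := by
  cases p <;> simp [e0, e1]

theorem len_pos (ha : 0 < a) (p : Pth ℓ U V w) : 0 < len a p := by
  cases p <;> simp only [len, Nat.lt_add_one, ha]

theorem edist_e0_e1_le (ha : 0 < a) (p : Pth ℓ U V w) :
    (Gecc a ℓ U V w).edist (Sum.inl (e0 p)) (Sum.inl (e1 p)) ≤ len a p :=
  edist_source_target_le p (e0_ne_e1 p) (len_pos ha p)

theorem edist_ua_x_le (ha : 0 < a) (u : U) :
    (Gecc a ℓ U V w).edist (Sum.inl (.ua u)) (Sum.inl .x) ≤ (a + 1 : ℕ) := by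
  rw [edist_comm]
  exact edist_le_of_add_le (m := 1) (n := a)
    (edist_e0_e1_le ha (.xu u)) (edist_e0_e1_le ha (.upath u)) (by omega)

theorem edist_ua_u0_le (ha : 0 < a) (u u' : U) :
    (Gecc a ℓ U V w).edist (Sum.inl (.ua u)) (Sum.inl (.u0 u')) ≤ (a + 2 : ℕ) :=
  edist_le_of_add_le (n := 1) (edist_ua_x_le ha u) (edist_e0_e1_le ha (.xu u')) (by omega)

theorem edist_ua_ua_le (ha : 0 < a) (u u' : U) :
    (Gecc a ℓ U V w).edist (Sum.inl (.ua u)) (Sum.inl (.ua u')) ≤ (2 * a + 2 : ℕ) :=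
  edist_le_of_add_le (n := a) (edist_ua_u0_le ha u u') (edist_e0_e1_le ha (.upath u')) (by omega)

theorem edist_ua_v0_le (ha : 0 < a) {u : U} {v : V}
    (h : ∃ c, u.1 c = true ∧ v.1 c = true ∧ w c = true) :
    (Gecc a ℓ U V w).edist (Sum.inl (.ua u)) (Sum.inl (.v0 v)) ≤ (2 * a + 1 : ℕ) := by
  obtain ⟨c, hu, hv, hw⟩ := h
  exact edist_le_of_add_le (n := a)
    (edist_le_of_add_le (m := a) (n := 1)
      (edist_e0_e1_le ha (.uc u c hu)) (edist_e0_e1_le ha (.wc c hw)) le_rfl)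
    (edist_e0_e1_le ha (.vc v c hv)) (by omega)

theorem edist_ua_inl_le (ha : 0 < a) {u : U}
    (hyes : ∀ v ∈ V, ∃ c, u.1 c = true ∧ v c = true ∧ w c = true)
    (hUcov : ∀ c : Fin ℓ, ∃ u ∈ U, u c = true) (hVcov : ∀ c : Fin ℓ, ∃ v ∈ V, v c = true)
    (b : Base ℓ U V) :
    (Gecc a ℓ U V w).edist (Sum.inl (.ua u)) (Sum.inl b) ≤ (3 * a + 2 : ℕ) := by
  have hv0 (v : V) := edist_ua_v0_le ha (hyes v v.2)
  cases b with
  | cU c =>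
    obtain ⟨u', hu', hc⟩ := hUcov c
    exact edist_le_of_add_le (n := a)
      (edist_ua_ua_le ha u ⟨u', hu'⟩) (edist_e0_e1_le ha (.uc ⟨u', hu'⟩ c hc)) (by omega)
  | cV c =>
    obtain ⟨v', hv', hc⟩ := hVcov c
    exact edist_le_of_add_le (n := a)
      (hv0 ⟨v', hv'⟩) (edist_comm.trans_le (edist_e0_e1_le ha (.vc ⟨v', hv'⟩ c hc))) (by omega)
  | u0 u' => exact (edist_ua_u0_le ha u u').trans (mod_cast by omega)
  | ua u' => exact (edist_ua_ua_le ha u u').trans (mod_cast by omega)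
  | v0 v => exact (hv0 v).trans (mod_cast by omega)
  | va v => exact edist_le_of_add_le (n := a) (hv0 v) (edist_e0_e1_le ha (.vpath v)) (by omega)
  | x => exact (edist_ua_x_le ha u).trans (mod_cast by omega)

theorem edist_ua_inr_le (ha : 0 < a) {u : U}
    (hyes : ∀ v ∈ V, ∃ c, u.1 c = true ∧ v c = true ∧ w c = true)
    (p : Pth ℓ U V w) (j : Fin (len a p - 1)) :
    (Gecc a ℓ U V w).edist (Sum.inl (.ua u)) (Sum.inr ⟨p, j⟩) ≤ (3 * a + 2 : ℕ) := by
  cases p with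
  | upath u' =>
    exact edist_le_of_add_le (n := a - 1)
      (edist_ua_u0_le ha u u') (edist_source_inr_le _ (e0_ne_e1 _) j) (by omega)
  | vpath v =>
    exact edist_le_of_add_le (n := a - 1)
      (edist_ua_v0_le ha (hyes v v.2)) (edist_source_inr_le _ (e0_ne_e1 _) j) (by omega)
  | uc u' c hc =>
    exact edist_le_of_add_le (n := a - 1)
      (edist_ua_ua_le ha u u') (edist_source_inr_le _ (e0_ne_e1 _) j) (by omega)
  | vc v c hc =>
    exact edist_le_of_add_le (n := a - 1) (edist_ua_v0_le ha (hyes v v.2))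
      (edist_comm.trans_le (edist_inr_target_le _ (e0_ne_e1 _) j)) (by omega)
  | wc c hc => exact j.elim0
  | xu u' => exact j.elim0

theorem eccent_ua_le (ha : 0 < a) {u : U}
    (hyes : ∀ v ∈ V, ∃ c, u.1 c = true ∧ v c = true ∧ w c = true)
    (hUcov : ∀ c : Fin ℓ, ∃ u ∈ U, u c = true) (hVcov : ∀ c : Fin ℓ, ∃ v ∈ V, v c = true) :
    (Gecc a ℓ U V w).eccent (Sum.inl (.ua u)) ≤ (3 * a + 2 : ℕ) := by
  refine iSup_le fun z => ?_
  rcases z with b | ⟨p, j⟩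
  · exact edist_ua_inl_le ha hyes hUcov hVcov b
  · exact edist_ua_inr_le ha hyes p j

end Gecc

end EccConstr

open EccConstr in
theorem eccentricity_construction_yes_case_general
    (a ℓ : ℕ) (ha : 0 < a)
    (U V : Set (Fin ℓ → Bool)) (w : Fin ℓ → Bool)
    (hUcov : ∀ c : Fin ℓ, ∃ u ∈ U, u c = true)
    (hVcov : ∀ c : Fin ℓ, ∃ v ∈ V, v c = true)
    (hyes : ∀ u ∈ U, ∀ v ∈ V, ∃ c, u c = true ∧ v c = true ∧ w c = true) :
    ∀ (u : Fin ℓ → Bool) (hu : u ∈ U),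
      ∀ z : Vert (Base ℓ U V) (Pth ℓ U V w) (len a),
        ∃ p : (Gecc a ℓ U V w).Walk (Sum.inl (Base.ua ⟨u, hu⟩)) z,
          p.length ≤ 3 * a + 2 := by
  intro u hu z
  exact SimpleGraph.exists_walk_length_le_of_edist_le <| SimpleGraph.edist_le_eccent.trans <|
    eccent_ua_le ha (hyes u hu) hUcov hVcov

open EccConstr in
theorem eccentricity_construction_yes_case
    (a ℓ : ℕ) (ha : 0 < a) (hℓ : 0 < ℓ)
    (U V : Set (Fin ℓ → Bool)) (hUfin : U.Finite) (hVfin : V.Finite)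
    (hU : U.Nonempty) (hV : V.Nonempty) (w : Fin ℓ → Bool)
    (hUone : ∀ u ∈ U, ∃ c, u c = true) (hVone : ∀ v ∈ V, ∃ c, v c = true)
    (hUcov : ∀ c : Fin ℓ, ∃ u ∈ U, u c = true)
    (hVcov : ∀ c : Fin ℓ, ∃ v ∈ V, v c = true)
    (hyes : ∀ u ∈ U, ∀ v ∈ V, ∃ c, u c = true ∧ v c = true ∧ w c = true) :
    ∀ (u : Fin ℓ → Bool) (hu : u ∈ U),
      ∀ z : Vert (Base ℓ U V) (Pth ℓ U V w) (len a),
        ∃ p : (Gecc a ℓ U V w).Walk (Sum.inl (Base.ua ⟨u, hu⟩)) z,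
          p.length ≤ 3 * a + 2 :=
  eccentricity_construction_yes_case_general a ℓ ha U V w hUcov hVcov hyes
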